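/- Let Ω ⊆ ℂ^d be open and let 𝒳 be a Hausdorff topological vector space of holomorphic functions on Ω satisfying (P1)–(P3). Let ℱ ⊆ 𝒫_d be a family of polynomials such that V(𝔦_ℱ) is finite, where I(ℱ) = 𝔤(ℱ)·𝔦_ℱ is the factorization of the ideal generated by ℱ through the greatest common divisor 𝔤(ℱ). Then ℱ is jointly cyclic in 𝒳 if and only if V(ℱ) ∩ Ω_max = ∅ and 𝔤(ℱ) is cyclic in 𝒳. -/

import Mathlib

/-!
A Hausdorff topological vector space `X` of holomorphic functions on an open set
`Ω ⊆ ℂ^d` satisfying (P1) (polynomials are dense), (P2) (point evaluations at points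
of `Ω` are continuous) and (P3) (the shift operators, and hence multiplication by any
polynomial, are continuous linear self maps).
-/
structure HoloFunSpace (d : ℕ) (Ω : Set (Fin d → ℂ)) (X : Type*)
    [AddCommGroup X] [Module ℂ X] [TopologicalSpace X] where
  /-- The realization of elements of `X` as (holomorphic) functions on `Ω`. -/
  toFun : X →ₗ[ℂ] ((Fin d → ℂ) → ℂ)
  holo : ∀ F : X, DifferentiableOn ℂ (toFun F) Ω
  inj : ∀ F G : X, Set.EqOn (toFun F) (toFun G) Ω → F = G
  /-- The polynomials, as elements of `X`. -/
  poly : MvPolynomial (Fin d) ℂ →ₗ[ℂ] X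
  poly_eval : ∀ (P : MvPolynomial (Fin d) ℂ), ∀ z ∈ Ω,
    toFun (poly P) z = MvPolynomial.eval z P
  /-- (P1): polynomials are dense in `X`. -/
  dense_poly : Dense (Set.range fun P : MvPolynomial (Fin d) ℂ => poly P)
  /-- (P2): point evaluations at points of `Ω` are continuous. -/
  eval_cont : ∀ z ∈ Ω, Continuous fun F : X => toFun F z
  /-- Multiplication by a polynomial, a continuous linear self map of `X`;
  (P3) is the special case of the shifts `mul (X j)`. -/
  mul : MvPolynomial (Fin d) ℂ → X →L[ℂ] X
  mul_eval : ∀ (P : MvPolynomial (Fin d) ℂ) (F : X), ∀ z ∈ Ω,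
    toFun (mul P F) z = MvPolynomial.eval z P * toFun F z

namespace HoloFunSpace

variable {d : ℕ} {Ω : Set (Fin d → ℂ)} {X : Type*}
  [AddCommGroup X] [Module ℂ X] [TopologicalSpace X]

/-- The maximal domain `Ω_max`: all `w ∈ ℂ^d` such that evaluation at `w`, defined on
polynomials, extends to a continuous linear functional on `X`. -/
def maxDomain (H : HoloFunSpace d Ω X) : Set (Fin d → ℂ) :=
  {w | ∃ Λ : X →L[ℂ] ℂ, ∀ P : MvPolynomial (Fin d) ℂ, Λ (H.poly P) = MvPolynomial.eval w P}

/-- The invariant subspace `S[F]`: the closure of `{P · F : P ∈ 𝒫_d}`. -/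
def invSub (H : HoloFunSpace d Ω X) (F : X) : Set X :=
  closure (Set.range fun P : MvPolynomial (Fin d) ℂ => H.mul P F)

/-- `F` is cyclic if `S[F] = X`. -/
def Cyclic (H : HoloFunSpace d Ω X) (F : X) : Prop := H.invSub F = Set.univ

/-- The joint invariant subspace `S[𝓕]`: the closed linear span of `⋃_{F ∈ 𝓕} S[F]`. -/
def jointInvSub (H : HoloFunSpace d Ω X) (𝓕 : Set X) : Set X :=
  closure (Submodule.span ℂ (⋃ F ∈ 𝓕, H.invSub F) : Set X)

/-- A family `𝓕` is jointly cyclic if `S[𝓕] = X`. -/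
def JointlyCyclic (H : HoloFunSpace d Ω X) (𝓕 : Set X) : Prop :=
  H.jointInvSub 𝓕 = Set.univ

end HoloFunSpace

/-!
The closed invariant subspace generated by `ℱ` is the closure `[I]` of the ideal
`I = I(ℱ) = g · 𝔦` in `X`. If `[I] = X`, then `[(g)] = X` because `I ⊆ (g)`, and no continuous
point evaluation at a `w ∈ V(ℱ)` can exist, since it would vanish on `[I]`.

Conversely, `𝒫_d / 𝔦` is finite-dimensional by the Nullstellensatz, so `Q ↦ g Q` maps it onto
a finite-dimensional subspace of `X ⧸ [I]`. When `g` is cyclic, this subspace is dense, hence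
equal to `X ⧸ [I]`. If `[I] ≠ X`, the commuting shifts induced on this finite-dimensional
quotient have a common eigenvector in its dual. That eigenvector is, up to scaling, a continuous
extension of `P ↦ P(w)` that vanishes on `I`, and so `w ∈ V(ℱ) ∩ Ω_max`.
-/

theorem Module.End.exists_common_eigenvector {K V : Type*} [Field K] [IsAlgClosed K]
    [AddCommGroup V] [Module K V] [FiniteDimensional K V] [Nontrivial V] {n : ℕ}
    (T : Fin n → Module.End K V) (hT : ∀ i j, Commute (T i) (T j)) :
    ∃ v : V, v ≠ 0 ∧ ∃ w : Fin n → K, ∀ i, T i v = w i • v := by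
  induction n generalizing V with
  | zero =>
    obtain ⟨v, hv⟩ := exists_ne (0 : V)
    exact ⟨v, hv, finZeroElim, finZeroElim⟩
  | succ n ih =>
    obtain ⟨μ, hμ⟩ := Module.End.exists_eigenvalue (T (Fin.last n))
    let E := Module.End.eigenspace (T (Fin.last n)) μ
    have : Nontrivial E := Submodule.nontrivial_iff_ne_bot.mpr hμ
    have hE : ∀ i, Set.MapsTo (T i) E E := fun i x hx =>
      Module.End.mem_eigenspace_iff.mpr <| by
        rw [← Module.End.mul_apply, (hT _ i).eq, Module.End.mul_apply,
          Module.End.mem_eigenspace_iff.mp hx, map_smul]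
    obtain ⟨v, hv, w, hw⟩ := ih (fun i => (T i.castSucc).restrict (hE i.castSucc))
      (fun i j => by ext x; exact congrArg (· x) (hT i.castSucc j.castSucc).eq)
    refine ⟨v, by simpa using hv, Fin.snoc w μ, Fin.lastCases ?_ fun i => ?_⟩
    · simpa using Module.End.mem_eigenspace_iff.mp v.2
    · rw [Fin.snoc_castSucc]
      exact congrArg Subtype.val (hw i)

theorem MvPolynomial.finite_quotient_of_finite_zeroLocus {σ k : Type*} [Finite σ] [Field k]
    [IsAlgClosed k] {I : Ideal (MvPolynomial σ k)} (hI : (zeroLocus k I).Finite) :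
    Module.Finite k (MvPolynomial σ k ⧸ I) := by
  classical
  let s := hI.toFinset
  -- `X j` is a root of `∏_{x ∈ V(I)} (t - x j)`, which vanishes on `V(I)`, so lies in `√I`
  have hint : ∀ j, IsIntegral k (Ideal.Quotient.mkₐ k I (X j)) := by
    intro j
    let p : Polynomial k := ∏ x ∈ s, (Polynomial.X - Polynomial.C (x j))
    have hrad : Polynomial.aeval (X j) p ∈ I.radical := by
      rw [← vanishingIdeal_zeroLocus_eq_radical (K := k)]
      intro x hx
      simpa [p] using Finset.prod_eq_zero (f := fun y : σ → k => x j - y j)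
        ((Set.Finite.mem_toFinset hI).mpr hx) (sub_self _)
    obtain ⟨m, hm⟩ := hrad
    refine ⟨p ^ m, (Polynomial.monic_prod_of_monic _ _ fun x _ =>
      Polynomial.monic_X_sub_C _).pow m, ?_⟩
    rw [← Polynomial.aeval_def, Polynomial.aeval_algHom_apply, map_pow,
      Ideal.Quotient.mkₐ_eq_mk, Ideal.Quotient.eq_zero_iff_mem]
    exact hm
  have hadj : Algebra.adjoin k (Set.range fun j => Ideal.Quotient.mkₐ k I (X j)) = ⊤ := by
    rw [Set.range_comp', ← AlgHom.map_adjoin, adjoin_range_X, Algebra.map_top,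
      AlgHom.range_eq_top]
    exact Ideal.Quotient.mkₐ_surjective k I
  have : Algebra.IsIntegral k (MvPolynomial σ k ⧸ I) :=
    integralClosure_eq_top_iff.mp <| top_unique <|
      hadj ▸ Algebra.adjoin_le (by rintro _ ⟨j, rfl⟩; exact hint j)
  exact Algebra.IsIntegral.finite

section FiniteCodimension

variable {𝕜 E : Type*} [NontriviallyNormedField 𝕜] [CompleteSpace 𝕜]
  [AddCommGroup E] [Module 𝕜 E] [TopologicalSpace E] [IsTopologicalAddGroup E]
  [ContinuousSMul 𝕜 E]

theorem Submodule.finiteDimensional_quotient_of_dense {M D : Submodule 𝕜 E}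
    (hM : IsClosed (M : Set E)) (hD : Dense (D : Set E)) [FiniteDimensional 𝕜 (D.map M.mkQ)] :
    FiniteDimensional 𝕜 (E ⧸ M) := by
  have : IsClosed (M : Set E) := hM
  have hDM : D.map M.mkQ = ⊤ := by
    rw [← Submodule.coe_eq_univ, ← (Submodule.closed_of_finiteDimensional _).closure_eq,
      Submodule.map_coe]
    exact (M.mkQ_surjective.denseRange.dense_image M.isOpenQuotientMap_mkQ.continuous hD).closure_eq
  have : FiniteDimensional 𝕜 (⊤ : Submodule 𝕜 (E ⧸ M)) := hDM ▸ inferInstance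
  exact Module.Finite.equiv Submodule.topEquiv

theorem Submodule.exists_common_eigenfunctional_of_finiteDimensional_quotient [IsAlgClosed 𝕜]
    {n : ℕ}
    (T : Fin n → E →L[𝕜] E) (hT : ∀ i j, Commute (T i) (T j)) {M : Submodule 𝕜 E}
    (hM : IsClosed (M : Set E)) (hMT : ∀ i, ∀ x ∈ M, T i x ∈ M) (hM_top : M ≠ ⊤)
    [FiniteDimensional 𝕜 (E ⧸ M)] :
    ∃ Λ : E →L[𝕜] 𝕜, Λ ≠ 0 ∧ (∀ x ∈ M, Λ x = 0) ∧
      ∃ w : Fin n → 𝕜, ∀ i x, Λ (T i x) = w i * Λ x := by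
  have : IsClosed (M : Set E) := hM
  have : Nontrivial (E ⧸ M) := Submodule.Quotient.nontrivial_iff.mpr hM_top
  let T' i : Module.End 𝕜 (E ⧸ M) := M.mapQ M (T i) (hMT i)
  have hT' : ∀ i j, Commute (T' i).dualMap (T' j).dualMap := fun i j => by
    refine LinearMap.ext fun φ => Submodule.linearMap_qext _ (LinearMap.ext fun x => ?_)
    exact congrArg φ (M.mkQ.congr_arg (congrArg (· x) (hT j i).eq) :)
  obtain ⟨φ, hφ, w, hw⟩ := Module.End.exists_common_eigenvector _ hT'
  refine ⟨⟨φ ∘ₗ M.mkQ, (LinearMap.continuous_of_finiteDimensional φ).comp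
    M.isOpenQuotientMap_mkQ.continuous⟩, ?_, fun x hx => ?_, w, fun i x => ?_⟩
  · refine fun h => hφ (Submodule.linearMap_qext _ (LinearMap.ext fun x => ?_))
    exact congrArg (· x) h
  · simp [(Submodule.Quotient.mk_eq_zero M).mpr hx]
  · exact congrArg (· (M.mkQ x)) (hw i)

end FiniteCodimension

namespace HoloFunSpace

variable {d : ℕ} {Ω : Set (Fin d → ℂ)} {X : Type*}
  [AddCommGroup X] [Module ℂ X] [TopologicalSpace X] (H : HoloFunSpace d Ω X)

open MvPolynomial

theorem mul_poly (P Q : MvPolynomial (Fin d) ℂ) : H.mul P (H.poly Q) = H.poly (P * Q) :=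
  H.inj _ _ fun z hz => by rw [H.mul_eval _ _ z hz, H.poly_eval _ z hz, H.poly_eval _ z hz, map_mul]

theorem mul_mul_apply (P Q : MvPolynomial (Fin d) ℂ) (F : X) :
    H.mul (P * Q) F = H.mul P (H.mul Q F) :=
  H.inj _ _ fun z hz => by simp only [H.mul_eval _ _ z hz, map_mul, mul_assoc]

theorem mul_add_apply (P Q : MvPolynomial (Fin d) ℂ) (F : X) :
    H.mul (P + Q) F = H.mul P F + H.mul Q F :=
  H.inj _ _ fun z hz => by
    simp only [map_add, Pi.add_apply, H.mul_eval _ _ z hz, add_mul]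

theorem mul_C_apply (a : ℂ) (F : X) : H.mul (C a) F = a • F :=
  H.inj _ _ fun z hz => by simp only [H.mul_eval _ _ z hz, map_smul, eval_C, Pi.smul_apply,
    smul_eq_mul]

theorem commute_mul (P Q : MvPolynomial (Fin d) ℂ) : Commute (H.mul P) (H.mul Q) :=
  ContinuousLinearMap.ext fun F => by
    simp only [_root_.mul_apply_eq_comp, ← mul_mul_apply, mul_comm]

section Eigenfunctional

variable {Λ : X →L[ℂ] ℂ} {w : Fin d → ℂ} (hΛ : ∀ j F, Λ (H.mul (MvPolynomial.X j) F) = w j * Λ F)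
include hΛ

theorem apply_mul_eq_eval_mul (Q : MvPolynomial (Fin d) ℂ) (F : X) :
    Λ (H.mul Q F) = eval w Q * Λ F := by
  induction Q using MvPolynomial.induction_on generalizing F with
  | C a => rw [mul_C_apply, map_smul, smul_eq_mul, eval_C]
  | add P Q hP hQ => rw [mul_add_apply, map_add, hP, hQ, map_add, add_mul]
  | mul_X P j hP => rw [mul_comm, mul_mul_apply, hΛ, hP, map_mul, eval_X, mul_assoc]

theorem apply_poly_eq_eval_mul (P : MvPolynomial (Fin d) ℂ) :
    Λ (H.poly P) = eval w P * Λ (H.poly 1) := by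
  rw [← H.apply_mul_eq_eval_mul hΛ, mul_poly, mul_one]

theorem apply_poly_one_ne_zero (hΛ0 : Λ ≠ 0) : Λ (H.poly 1) ≠ 0 := by
  intro h
  refine hΛ0 (DFunLike.coe_injective (Continuous.ext_on H.dense_poly Λ.continuous
    continuous_zero ?_))
  rintro _ ⟨P, rfl⟩
  rw [H.apply_poly_eq_eval_mul hΛ, h, mul_zero, zero_apply]

theorem mem_maxDomain (hΛ0 : Λ ≠ 0) : w ∈ H.maxDomain :=
  ⟨(Λ (H.poly 1))⁻¹ • Λ, fun P => by
    rw [_root_.smul_apply, H.apply_poly_eq_eval_mul hΛ P, smul_eq_mul, mul_comm (eval w P),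
      inv_mul_cancel_left₀ (H.apply_poly_one_ne_zero hΛ hΛ0)]⟩

end Eigenfunctional

variable [IsTopologicalAddGroup X] [ContinuousSMul ℂ X]

noncomputable def idealClosure (I : Ideal (MvPolynomial (Fin d) ℂ)) : Submodule ℂ X :=
  ((I.restrictScalars ℂ).map H.poly).topologicalClosure

theorem coe_idealClosure (I : Ideal (MvPolynomial (Fin d) ℂ)) :
    (H.idealClosure I : Set X) = closure (H.poly '' I) :=
  Submodule.topologicalClosure_coe _

theorem idealClosure_mono {I J : Ideal (MvPolynomial (Fin d) ℂ)} (hIJ : I ≤ J) :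
    H.idealClosure I ≤ H.idealClosure J :=
  Submodule.topologicalClosure_mono (Submodule.map_mono hIJ)

theorem mul_mem_idealClosure {I : Ideal (MvPolynomial (Fin d) ℂ)} (Q : MvPolynomial (Fin d) ℂ)
    {F : X} (hF : F ∈ H.idealClosure I) : H.mul Q F ∈ H.idealClosure I := by
  rw [← SetLike.mem_coe, coe_idealClosure] at hF ⊢
  refine map_mem_closure (H.mul Q).continuous hF ?_
  rintro _ ⟨P, hP, rfl⟩
  exact ⟨Q * P, I.mul_mem_left Q hP, (H.mul_poly Q P).symm⟩

theorem invSub_poly (P : MvPolynomial (Fin d) ℂ) :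
    H.invSub (H.poly P) = H.idealClosure (Ideal.span {P}) := by
  rw [coe_idealClosure, invSub]
  congr 1
  ext F
  simp only [Set.mem_range, Set.mem_image, SetLike.mem_coe, Ideal.mem_span_singleton',
    mul_poly]
  constructor
  · rintro ⟨Q, rfl⟩
    exact ⟨Q * P, ⟨Q, rfl⟩, rfl⟩
  · rintro ⟨_, ⟨Q, rfl⟩, rfl⟩
    exact ⟨Q, rfl⟩

theorem cyclic_poly_iff (P : MvPolynomial (Fin d) ℂ) :
    H.Cyclic (H.poly P) ↔ H.idealClosure (Ideal.span {P}) = ⊤ := by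
  rw [Cyclic, invSub_poly, Submodule.coe_eq_univ]

theorem jointInvSub_poly_image (ℱ : Set (MvPolynomial (Fin d) ℂ)) :
    H.jointInvSub (H.poly '' ℱ) = H.idealClosure (Ideal.span ℱ) := by
  refine (closure_minimal ?_ (Submodule.isClosed_topologicalClosure _)).antisymm ?_
  · rw [SetLike.coe_subset_coe, Submodule.span_le]
    refine Set.iUnion₂_subset fun _ ⟨P, hP, hF⟩ => hF ▸ ?_
    rw [invSub_poly, SetLike.coe_subset_coe]
    exact H.idealClosure_mono (Ideal.span_mono (Set.singleton_subset_iff.mpr hP))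
  · rw [Submodule.topologicalClosure_coe]
    refine closure_mono ?_
    rintro _ ⟨R, hR, rfl⟩
    obtain ⟨n, f, P, rfl⟩ := Submodule.mem_span_set'.mp hR
    simp only [smul_eq_mul, map_sum, ← mul_poly]
    exact Submodule.sum_mem _ fun i _ => Submodule.subset_span <|
      Set.mem_iUnion₂.mpr ⟨_, ⟨P i, (P i).2, rfl⟩, subset_closure ⟨f i, rfl⟩⟩

theorem jointlyCyclic_poly_image_iff (ℱ : Set (MvPolynomial (Fin d) ℂ)) :
    H.JointlyCyclic (H.poly '' ℱ) ↔ H.idealClosure (Ideal.span ℱ) = ⊤ := by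
  rw [JointlyCyclic, jointInvSub_poly_image, Submodule.coe_eq_univ]

theorem idealClosure_span_ne_top_of_mem_maxDomain {ℱ : Set (MvPolynomial (Fin d) ℂ)}
    {w : Fin d → ℂ} (hw : w ∈ H.maxDomain) (hℱ : ∀ P ∈ ℱ, eval w P = 0) :
    H.idealClosure (Ideal.span ℱ) ≠ ⊤ := by
  obtain ⟨Λ, hΛ⟩ := hw
  have hker : H.idealClosure (Ideal.span ℱ) ≤ LinearMap.ker (Λ : X →ₗ[ℂ] ℂ) := by
    refine Submodule.topologicalClosure_minimal _ ?_ Λ.isClosed_ker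
    rintro _ ⟨P, hP, rfl⟩
    rw [LinearMap.mem_ker, ContinuousLinearMap.coe_coe, hΛ]
    exact (Ideal.span_le (I := RingHom.ker (eval w)).mpr hℱ) hP
  intro htop
  have := hker (htop ▸ Submodule.mem_top : H.poly 1 ∈ _)
  rw [LinearMap.mem_ker, ContinuousLinearMap.coe_coe, hΛ, map_one] at this
  exact one_ne_zero this

theorem exists_mem_maxDomain_of_finiteDimensional_quotient {I : Ideal (MvPolynomial (Fin d) ℂ)}
    (hI : H.idealClosure I ≠ ⊤) [FiniteDimensional ℂ (X ⧸ H.idealClosure I)] :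
    ∃ w ∈ H.maxDomain, ∀ P ∈ I, eval w P = 0 := by
  obtain ⟨Λ, hΛ0, hΛI, w, hΛ⟩ :=
    Submodule.exists_common_eigenfunctional_of_finiteDimensional_quotient
      (fun j => H.mul (MvPolynomial.X j)) (M := H.idealClosure I) (fun _ _ => H.commute_mul _ _)
      (Submodule.isClosed_topologicalClosure _) (fun _ _ => H.mul_mem_idealClosure _) hI
  refine ⟨w, H.mem_maxDomain hΛ hΛ0, fun P hP => ?_⟩
  have hP0 : Λ (H.poly P) = 0 :=
    hΛI _ (Submodule.le_topologicalClosure _ ⟨P, hP, rfl⟩)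
  rw [H.apply_poly_eq_eval_mul hΛ] at hP0
  exact (mul_eq_zero.mp hP0).resolve_right (H.apply_poly_one_ne_zero hΛ hΛ0)

theorem finiteDimensional_quotient_idealClosure_span_mul {g : MvPolynomial (Fin d) ℂ}
    {𝔦 : Ideal (MvPolynomial (Fin d) ℂ)} [Module.Finite ℂ (MvPolynomial (Fin d) ℂ ⧸ 𝔦)]
    (hg : H.idealClosure (Ideal.span {g}) = ⊤) :
    FiniteDimensional ℂ (X ⧸ H.idealClosure (Ideal.span {g} * 𝔦)) := by
  set M := H.idealClosure (Ideal.span {g} * 𝔦)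
  let D : Submodule ℂ X := ((Ideal.span {g}).restrictScalars ℂ).map H.poly
  let ψ : MvPolynomial (Fin d) ℂ →ₗ[ℂ] X ⧸ M := M.mkQ ∘ₗ H.poly ∘ₗ LinearMap.mulLeft ℂ g
  have hψ : 𝔦.restrictScalars ℂ ≤ LinearMap.ker ψ := fun Q hQ =>
    (Submodule.Quotient.mk_eq_zero M).mpr (Submodule.le_topologicalClosure _
      ⟨g * Q, Ideal.mul_mem_mul (Ideal.mem_span_singleton_self g) hQ, rfl⟩)
  have : Module.Finite ℂ (MvPolynomial (Fin d) ℂ ⧸ 𝔦.restrictScalars ℂ) :=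
    Module.Finite.equiv (Submodule.Quotient.restrictScalarsEquiv ℂ 𝔦).symm
  have hDψ : D.map M.mkQ ≤ LinearMap.range ((𝔦.restrictScalars ℂ).liftQ ψ hψ) := by
    rw [Submodule.range_liftQ]
    rintro _ ⟨_, ⟨P, hP, rfl⟩, rfl⟩
    obtain ⟨Q, rfl⟩ := Ideal.mem_span_singleton.mp hP
    exact ⟨Q, rfl⟩
  have : FiniteDimensional ℂ (D.map M.mkQ) := Submodule.finiteDimensional_of_le hDψ
  exact Submodule.finiteDimensional_quotient_of_dense (Submodule.isClosed_topologicalClosure _)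
    (Submodule.dense_iff_topologicalClosure_eq_top.mpr hg)

end HoloFunSpace

open HoloFunSpace in
theorem jointlyCyclic_iff_of_finite_vanishing_general
    {d : ℕ} {Ω : Set (Fin d → ℂ)} {X : Type*}
    [AddCommGroup X] [Module ℂ X] [TopologicalSpace X]
    [IsTopologicalAddGroup X] [ContinuousSMul ℂ X]
    (H : HoloFunSpace d Ω X)
    (ℱ : Set (MvPolynomial (Fin d) ℂ)) (g : MvPolynomial (Fin d) ℂ)
    (𝔦 : Ideal (MvPolynomial (Fin d) ℂ))
    (h𝔦 : Ideal.span ℱ = Ideal.span {g} * 𝔦)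
    (hV𝔦 : {w : Fin d → ℂ | ∀ P ∈ 𝔦, MvPolynomial.eval w P = 0}.Finite) :
    H.JointlyCyclic (H.poly '' ℱ) ↔
      ({w : Fin d → ℂ | ∀ P ∈ ℱ, MvPolynomial.eval w P = 0} ∩ H.maxDomain = ∅ ∧
        H.Cyclic (H.poly g)) := by
  rw [jointlyCyclic_poly_image_iff, cyclic_poly_iff]
  constructor
  · intro hℱ
    refine ⟨Set.eq_empty_of_forall_notMem fun w ⟨hw, hmax⟩ =>
      H.idealClosure_span_ne_top_of_mem_maxDomain hmax hw hℱ, top_unique ?_⟩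
    exact hℱ ▸ H.idealClosure_mono (h𝔦 ▸ Ideal.mul_le_left)
  · rintro ⟨hV, hg⟩
    have := MvPolynomial.finite_quotient_of_finite_zeroLocus hV𝔦
    have := H.finiteDimensional_quotient_idealClosure_span_mul hg (𝔦 := 𝔦)
    by_contra hℱ
    rw [h𝔦] at hℱ
    obtain ⟨w, hmax, hw⟩ := H.exists_mem_maxDomain_of_finiteDimensional_quotient hℱ
    exact hV.subset ⟨fun P hP => hw P (h𝔦 ▸ Ideal.subset_span hP), hmax⟩

open HoloFunSpace in
/-- Let `ℱ ⊆ 𝒫_d` be a family of polynomials, `g = 𝔤(ℱ)` a greatest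
common divisor of `ℱ`, and `𝔦 = 𝔦_ℱ` the ideal with `I(ℱ) = g · 𝔦` and `𝔤(𝔦) = 1`.
If the vanishing set `V(𝔦)` is finite, then `ℱ` is jointly cyclic if and only if
`V(ℱ) ∩ Ω_max = ∅` and `g` is cyclic. -/
theorem jointlyCyclic_iff_of_finite_vanishing
    {d : ℕ} {Ω : Set (Fin d → ℂ)} {X : Type*}
    [AddCommGroup X] [Module ℂ X] [TopologicalSpace X]
    [IsTopologicalAddGroup X] [ContinuousSMul ℂ X] [T2Space X]
    (hΩ : IsOpen Ω) (H : HoloFunSpace d Ω X)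
    (ℱ : Set (MvPolynomial (Fin d) ℂ)) (g : MvPolynomial (Fin d) ℂ)
    (hg_dvd : ∀ P ∈ ℱ, g ∣ P)
    (hg_gcd : ∀ q : MvPolynomial (Fin d) ℂ, (∀ P ∈ ℱ, q ∣ P) → q ∣ g)
    (𝔦 : Ideal (MvPolynomial (Fin d) ℂ))
    (h𝔦 : Ideal.span ℱ = Ideal.span {g} * 𝔦)
    (h𝔦gcd : ∀ q : MvPolynomial (Fin d) ℂ, (∀ P ∈ 𝔦, q ∣ P) → IsUnit q)
    (hV𝔦 : {w : Fin d → ℂ | ∀ P ∈ 𝔦, MvPolynomial.eval w P = 0}.Finite) :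
    H.JointlyCyclic (H.poly '' ℱ) ↔
      ({w : Fin d → ℂ | ∀ P ∈ ℱ, MvPolynomial.eval w P = 0} ∩ H.maxDomain = ∅ ∧
        H.Cyclic (H.poly g)) :=
  jointlyCyclic_iff_of_finite_vanishing_general H ℱ g 𝔦 h𝔦 hV𝔦
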